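/- arXiv:2301.06573 — 5 statements merged into one kernel-verified Lean document; each statement's English description precedes it below -/
import Mathlib

section
/- Let Λ be a sublattice of ℤⁿ. The following are equivalent: (1) the set Λ intersects every integer unit cube x + {0,1}ⁿ for x ∈ ℤⁿ; (2) every coset v + Λ intersects every integer unit cube; (3) every coset v + Λ contains a point of the unit cube {0,1}ⁿ. -/
/-! Membership in a unit cube is translation invariant: `y ∈ x + {0,1}ⁿ` iff `y - x ∈ {0,1}ⁿ`.
So translating by `x` moves the coset `v + Λ` to `(v - x) + Λ` and the cube `x + {0,1}ⁿ` to
`{0,1}ⁿ`, while `Λ` itself is the coset `0 + Λ`. -/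

theorem forall_eq_or_eq_add_one_iff_sub {ι G : Type*} [AddCommGroup G] [One G] (x y : ι → G) :
    (∀ i, y i = x i ∨ y i = x i + 1) ↔ ∀ i, (y - x) i = 0 ∨ (y - x) i = 1 := by
  simp only [Pi.sub_apply, sub_eq_iff_eq_add', add_zero]

/-- For a sublattice Λ of ℤⁿ, the following are equivalent:
(1) Λ intersects every integer unit cube x + {0,1}ⁿ;
(2) every coset v + Λ intersects every integer unit cube;
(3) every coset v + Λ contains a point of the unit cube {0,1}ⁿ. -/
theorem stmt_0 (n : ℕ) (Λ : AddSubgroup (Fin n → ℤ)) :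
    List.TFAE
      [ (∀ x : Fin n → ℤ, ∃ y ∈ Λ, ∀ i, y i = x i ∨ y i = x i + 1),
        (∀ v x : Fin n → ℤ, ∃ y : Fin n → ℤ, y - v ∈ Λ ∧ ∀ i, y i = x i ∨ y i = x i + 1),
        (∀ v : Fin n → ℤ, ∃ y : Fin n → ℤ, y - v ∈ Λ ∧ ∀ i, y i = 0 ∨ y i = 1) ] := by
  tfae_have 1 → 3 := by
    intro h1 v
    obtain ⟨y, hyΛ, hy⟩ := h1 (-v)
    refine ⟨y + v, by simpa using hyΛ, ?_⟩
    simpa [sub_neg_eq_add] using (forall_eq_or_eq_add_one_iff_sub (-v) y).1 hy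
  tfae_have 3 → 2 := by
    intro h3 v x
    obtain ⟨y, hyΛ, hy⟩ := h3 (v - x)
    refine ⟨y + x, by simpa [sub_sub_eq_add_sub] using hyΛ, ?_⟩
    exact (forall_eq_or_eq_add_one_iff_sub x (y + x)).2 (by simpa using hy)
  tfae_have 2 → 1 := by
    intro h2 x
    obtain ⟨y, hyΛ, hy⟩ := h2 0 x
    exact ⟨y, by simpa using hyΛ, hy⟩
  tfae_finish
end

section
/- Let n ≥ 3 and let S = {v₁, …, vₙ} ⊂ ℤⁿ be a negative cyclic subset with associated integers aᵢ = ⟨vᵢ, vᵢ⟩ ≥ 2 (with respect to the standard positive-definite inner product), satisfying ⟨vᵢ, vᵢ₊₁⟩ = −1 for 1 ≤ i ≤ n−1, ⟨vₙ, v₁⟩ = 1, and ⟨vᵢ, vⱼ⟩ = 0 otherwise for i ≠ j. Suppose I(S) := Σᵢ (aᵢ − 3) > 0. Let W = Σᵢ vᵢ and z = (1/2)W. Then every vector x in the sublattice Λ generated by S satisfies ‖x − z‖² ≥ (n + I(S))/4 > n/4. -/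
/-!
Put `d i = c i - 1/2`, so that `x - z = ∑ d i • v i` and `‖x - z‖²` is the Gram form
`∑ a i d i² - 2 ∑ d i d (i+1) + 2 d 0 d (n-1)`. Its part `∑ 2 d i² - 2 ∑ d i d (i+1) + 2 d 0 d (n-1)`
is the sum of squares `∑ (d i - d (i+1))² + (d 0 + d (n-1))² ≥ 0`, and the rest `∑ (a i - 2) d i²`
is at least `∑ (a i - 2) / 4 = (n + I(S)) / 4`, because each `d i` is an odd multiple of `1/2`.
-/

/-- The standard inner product on ℤⁿ. -/
def stdInnerZ {n : ℕ} (u w : Fin n → ℤ) : ℤ := ∑ t, u t * w t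

open Finset

theorem stdInnerZ_comm {n : ℕ} (u w : Fin n → ℤ) : stdInnerZ u w = stdInnerZ w u :=
  sum_congr rfl fun _ _ => mul_comm _ _

theorem sum_sq_sum_mul_eq_sum_sum_stdInnerZ {m : ℕ} (s : Finset ℕ) (d : ℕ → ℝ)
    (v : ℕ → Fin m → ℤ) :
    ∑ t, (∑ i ∈ s, d i * v i t) ^ 2 = ∑ i ∈ s, ∑ j ∈ s, d i * d j * stdInnerZ (v i) (v j) := by
  simp only [sq, sum_mul_sum]
  simp only [stdInnerZ, Int.cast_sum, Int.cast_mul, mul_sum]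
  rw [sum_comm]
  refine sum_congr rfl fun i _ => ?_
  rw [sum_comm]
  exact sum_congr rfl fun j _ => sum_congr rfl fun t _ => by ring

theorem sum_range_ite_succ_lt {M : Type*} [AddCommMonoid M] (n : ℕ) (f : ℕ → M) :
    ∑ i ∈ range n, (if i + 1 < n then f i else 0) = ∑ i ∈ range (n - 1), f i := by
  rw [← sum_filter]
  congr 1
  ext i; simp only [mem_filter, mem_range]; omega

theorem cyclic_quadratic_form_eq {n : ℕ} (hn : 1 ≤ n) (a d : ℕ → ℝ) :
    ∑ i ∈ range n, ∑ j ∈ range n, d i * d j *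
      ((if i = j then a i else 0) - (if j = i + 1 then 1 else 0) - (if i = j + 1 then 1 else 0)
        + (if i = 0 ∧ j = n - 1 then 1 else 0) + (if j = 0 ∧ i = n - 1 then 1 else 0)) =
      ∑ i ∈ range n, a i * d i ^ 2 - 2 * ∑ i ∈ range (n - 1), d i * d (i + 1)
        + 2 * (d 0 * d (n - 1)) := by
  have h0 : 0 ∈ range n := mem_range.2 hn
  have hlast : n - 1 ∈ range n := mem_range.2 (by omega)
  simp only [mul_add, mul_sub, sum_add_distrib, sum_sub_distrib, mul_ite, mul_zero, mul_one,
    ite_and, sum_ite_eq, sum_ite_eq', sum_ite_irrel, sum_const_zero, h0, hlast, if_true]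
  rw [sum_comm (f := fun i j => if i = j + 1 then d i * d j else 0)]
  simp only [sum_ite_eq', mem_range, sum_range_ite_succ_lt]
  have hdiag : ∑ i ∈ range n, (if i < n then d i * d i * a i else 0) =
      ∑ i ∈ range n, a i * d i ^ 2 :=
    sum_congr rfl fun i hi => by rw [if_pos (mem_range.1 hi)]; ring
  have hsymm : ∑ i ∈ range (n - 1), d (i + 1) * d i = ∑ i ∈ range (n - 1), d i * d (i + 1) :=
    sum_congr rfl fun _ _ => mul_comm _ _
  rw [hdiag, hsymm]
  ring

theorem cyclic_sum_sq_identity {n : ℕ} (hn : 1 ≤ n) (d : ℕ → ℝ) :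
    2 * ∑ i ∈ range n, d i ^ 2 - 2 * ∑ i ∈ range (n - 1), d i * d (i + 1)
        + 2 * (d 0 * d (n - 1)) =
      ∑ i ∈ range (n - 1), (d i - d (i + 1)) ^ 2 + (d 0 + d (n - 1)) ^ 2 := by
  obtain ⟨m, rfl⟩ : ∃ m, n = m + 1 := ⟨n - 1, by omega⟩
  have hfirst := sum_range_succ' (fun i => d i ^ 2) m
  have hlast := sum_range_succ (fun i => d i ^ 2) m
  have hexpand : ∑ i ∈ range m, (d i - d (i + 1)) ^ 2 = ∑ i ∈ range m, d i ^ 2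
      + ∑ i ∈ range m, d (i + 1) ^ 2 - 2 * ∑ i ∈ range m, d i * d (i + 1) := by
    rw [← sum_add_distrib, mul_sum, ← sum_sub_distrib]
    exact sum_congr rfl fun _ _ => by ring
  simp only [add_tsub_cancel_right] at hexpand ⊢
  linarith

theorem one_div_four_le_sq_intCast_sub_half (c : ℤ) : 1 / 4 ≤ ((c : ℝ) - 1 / 2) ^ 2 := by
  have hc : (0 : ℤ) ≤ c * (c - 1) := by rcases le_or_gt c 0 with h | h <;> nlinarith
  have hc' : (0 : ℝ) ≤ c * (c - 1) := by exact_mod_cast hc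
  linarith [show ((c : ℝ) - 1 / 2) ^ 2 = c * (c - 1) + 1 / 4 by ring]

theorem sum_div_four_le_cyclic_form {n : ℕ} (hn : 1 ≤ n) (a d : ℕ → ℝ)
    (ha : ∀ i < n, 2 ≤ a i) (hd : ∀ i, 1 / 4 ≤ d i ^ 2) :
    ∑ i ∈ range n, (a i - 2) / 4 ≤
      ∑ i ∈ range n, a i * d i ^ 2 - 2 * ∑ i ∈ range (n - 1), d i * d (i + 1)
        + 2 * (d 0 * d (n - 1)) := by
  have hdiag : ∑ i ∈ range n, (a i - 2) / 4 ≤ ∑ i ∈ range n, (a i - 2) * d i ^ 2 :=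
    sum_le_sum fun i hi => by
      have := ha i (mem_range.1 hi)
      nlinarith [hd i]
  have hsplit : ∑ i ∈ range n, a i * d i ^ 2 =
      ∑ i ∈ range n, (a i - 2) * d i ^ 2 + 2 * ∑ i ∈ range n, d i ^ 2 := by
    rw [mul_sum, ← sum_add_distrib]
    exact sum_congr rfl fun _ _ => by ring
  have hsos := cyclic_sum_sq_identity hn d
  have : 0 ≤ ∑ i ∈ range (n - 1), (d i - d (i + 1)) ^ 2 :=
    sum_nonneg fun _ _ => sq_nonneg _
  linarith [sq_nonneg (d 0 + d (n - 1))]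

/-- The paper's negative cyclic subset `{v₁, …, vₙ}`, indexed here as `v 0, …, v (n - 1)`. -/
structure IsNegCyclic {n : ℕ} (v : ℕ → Fin n → ℤ) (a : ℕ → ℤ) : Prop where
  inner_self : ∀ i < n, stdInnerZ (v i) (v i) = a i
  inner_succ : ∀ i, i + 1 < n → stdInnerZ (v i) (v (i + 1)) = -1
  inner_last_first : stdInnerZ (v (n - 1)) (v 0) = 1
  inner_eq_zero : ∀ i j, i < n → j < n → i ≠ j → j ≠ i + 1 → i ≠ j + 1 →
    ¬(i = 0 ∧ j = n - 1) → ¬(j = 0 ∧ i = n - 1) → stdInnerZ (v i) (v j) = 0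

namespace IsNegCyclic

variable {n : ℕ} {v : ℕ → Fin n → ℤ} {a : ℕ → ℤ}

theorem stdInnerZ_eq (hS : IsNegCyclic v a) (hn : 3 ≤ n) {i j : ℕ} (hi : i < n) (hj : j < n) :
    stdInnerZ (v i) (v j) =
      (if i = j then a i else 0) - (if j = i + 1 then 1 else 0) - (if i = j + 1 then 1 else 0)
        + (if i = 0 ∧ j = n - 1 then 1 else 0) + (if j = 0 ∧ i = n - 1 then 1 else 0) := by
  split_ifs <;> try omega
  · subst_vars; simpa using hS.inner_self _ hi
  · subst_vars; simpa using hS.inner_succ i hj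
  · subst_vars; simpa [stdInnerZ_comm] using hS.inner_succ j hi
  · obtain ⟨rfl, rfl⟩ := ‹_ ∧ _›; simpa [stdInnerZ_comm] using hS.inner_last_first
  · obtain ⟨rfl, rfl⟩ := ‹_ ∧ _›; simpa using hS.inner_last_first
  · simpa using hS.inner_eq_zero i j hi hj ‹_› ‹_› ‹_› ‹_› ‹_›

theorem sum_sq_sum_mul (hS : IsNegCyclic v a) (hn : 3 ≤ n) (d : ℕ → ℝ) :
    ∑ t, (∑ i ∈ range n, d i * v i t) ^ 2 =
      ∑ i ∈ range n, a i * d i ^ 2 - 2 * ∑ i ∈ range (n - 1), d i * d (i + 1)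
        + 2 * (d 0 * d (n - 1)) := by
  rw [sum_sq_sum_mul_eq_sum_sum_stdInnerZ, ← cyclic_quadratic_form_eq (by omega)]
  refine sum_congr rfl fun i hi => sum_congr rfl fun j hj => ?_
  rw [hS.stdInnerZ_eq hn (mem_range.1 hi) (mem_range.1 hj)]
  push_cast [apply_ite (Int.cast : ℤ → ℝ)]
  rfl

end IsNegCyclic

/-- Let S = {v₁,…,vₙ} ⊂ ℤⁿ (n ≥ 3) be a negative cyclic subset with
⟨vᵢ,vᵢ⟩ = aᵢ ≥ 2, ⟨vᵢ,vᵢ₊₁⟩ = −1 (1 ≤ i ≤ n−1), ⟨vₙ,v₁⟩ = 1 and all other pairwise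
inner products zero, and suppose I(S) = Σᵢ(aᵢ − 3) > 0. Let W = Σᵢ vᵢ and z = W/2.
Then every x in the sublattice generated by S satisfies
‖x − z‖² ≥ (n + I(S))/4 > n/4. -/
theorem stmt_6 (n : ℕ) (hn : 3 ≤ n) (v : ℕ → Fin n → ℤ) (a : ℕ → ℤ)
    (ha : ∀ i < n, 2 ≤ a i)
    (hdiag : ∀ i < n, stdInnerZ (v i) (v i) = a i)
    (hadj : ∀ i, i + 1 < n → stdInnerZ (v i) (v (i + 1)) = -1)
    (hwrap : stdInnerZ (v (n - 1)) (v 0) = 1)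
    (hzero : ∀ i j, i < n → j < n → i ≠ j → j ≠ i + 1 → i ≠ j + 1 →
      ¬(i = 0 ∧ j = n - 1) → ¬(j = 0 ∧ i = n - 1) → stdInnerZ (v i) (v j) = 0)
    (hI : 0 < ∑ i ∈ Finset.range n, (a i - 3)) :
    (∀ c : ℕ → ℤ,
      ((n : ℝ) + (∑ i ∈ Finset.range n, (a i - 3) : ℤ)) / 4 ≤
        ∑ t : Fin n, (((∑ i ∈ Finset.range n, c i * v i t : ℤ) : ℝ) -
          ((∑ i ∈ Finset.range n, v i t : ℤ) : ℝ) / 2) ^ 2) ∧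
      (n : ℝ) / 4 < ((n : ℝ) + (∑ i ∈ Finset.range n, (a i - 3) : ℤ)) / 4 := by
  have hweight : ((n : ℝ) + (∑ i ∈ range n, (a i - 3) : ℤ)) / 4 =
      ∑ i ∈ range n, ((a i : ℝ) - 2) / 4 := by
    rw [← sum_div]
    push_cast
    simp only [sum_sub_distrib, sum_const, card_range, nsmul_eq_mul]
    ring
  have hI' : (0 : ℝ) < (∑ i ∈ range n, (a i - 3) : ℤ) := by exact_mod_cast hI
  refine ⟨fun c => ?_, by linarith⟩
  have hcentre : ∀ t : Fin n, ((∑ i ∈ range n, c i * v i t : ℤ) : ℝ) -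
      ((∑ i ∈ range n, v i t : ℤ) : ℝ) / 2 = ∑ i ∈ range n, ((c i : ℝ) - 1 / 2) * v i t := by
    intro t
    push_cast
    rw [sum_div, ← sum_sub_distrib]
    exact sum_congr rfl fun _ _ => by ring
  have hS : IsNegCyclic v a := ⟨hdiag, hadj, hwrap, hzero⟩
  simp only [hcentre, hS.sum_sq_sum_mul hn, hweight]
  exact sum_div_four_le_cyclic_form (by omega) (fun i => (a i : ℝ)) _
    (fun i hi => by exact_mod_cast ha i hi) fun i => one_div_four_le_sq_intCast_sub_half (c i)
end

section
/- Let n ≥ 3 and let S = {v₁, …, vₙ} ⊂ ℤⁿ be a negative cyclic subset (⟨vᵢ, vᵢ⟩ = aᵢ ≥ 2, ⟨vᵢ, vᵢ₊₁⟩ = −1 for 1 ≤ i ≤ n−1, ⟨vₙ, v₁⟩ = 1, ⟨vᵢ, vⱼ⟩ = 0 otherwise for i ≠ j) with I(S) = Σᵢ(aᵢ − 3) > 0, and suppose the Wu element W = Σᵢ vᵢ has all coordinates odd with respect to the standard basis of ℤⁿ. Then the sublattice Λ generated by S is not cubiquitous: there exists x₀ ∈ ℤⁿ such that Λ ∩ (x₀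 + {0,1}ⁿ) = ∅. -/
/-!
Write the Wu element as `W = 2 x₀ + 1` coordinatewise. If `λ = ∑ cᵢ vᵢ` lies in the cube
`x₀ + {0,1}ⁿ`, then `2λ - W = ∑ (2cᵢ - 1) vᵢ` has every coordinate equal to `±1`, so its norm
is `n`. But for odd coefficients `Bᵢ` the Gram matrix of a negative cyclic family gives
`‖∑ Bᵢ vᵢ‖² = ∑ (aᵢ - 2) Bᵢ² + ∑ (Bᵢ - Bᵢ₊₁)² + (B₁ + Bₙ)² ≥ ∑ (aᵢ - 2) = I(S) + n > n`.
-/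

open Finset

theorem sum_range_ite_lt (m : ℕ) (f : ℕ → ℤ) :
    ∑ i ∈ range (m + 1), (if i < m then f i else 0) = ∑ i ∈ range m, f i := by
  rw [sum_range_succ, if_neg (lt_irrefl m), add_zero]
  exact sum_congr rfl fun i hi => if_pos (mem_range.mp hi)

theorem sum_le_sum_mul_sq_of_odd {s : Finset ℕ} {w B : ℕ → ℤ} (hw : ∀ i ∈ s, 0 ≤ w i)
    (hB : ∀ i ∈ s, Odd (B i)) : ∑ i ∈ s, w i ≤ ∑ i ∈ s, w i * B i ^ 2 := by
  refine sum_le_sum fun i hi => ?_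
  have : 1 ≤ B i ^ 2 :=
    (one_le_sq_iff_one_le_abs _).2 (Int.one_le_abs fun h => by simpa [h] using hB i hi)
  nlinarith [hw i hi]

theorem stdInnerZ_self_of_sq_eq_one {n : ℕ} {u : Fin n → ℤ} (hu : ∀ t, u t ^ 2 = 1) :
    stdInnerZ u u = n := by
  simp [stdInnerZ, ← sq, hu]

theorem stdInnerZ_sum_mul_self {n : ℕ} (s : Finset ℕ) (B : ℕ → ℤ) (v : ℕ → Fin n → ℤ) :
    stdInnerZ (fun t => ∑ i ∈ s, B i * v i t) (fun t => ∑ i ∈ s, B i * v i t) =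
      ∑ i ∈ s, ∑ j ∈ s, B i * B j * stdInnerZ (v i) (v j) := by
  simp_rw [stdInnerZ, sum_mul_sum, mul_sum]
  rw [sum_comm]
  refine sum_congr rfl fun i _ => ?_
  rw [sum_comm]
  exact sum_congr rfl fun j _ => sum_congr rfl fun t _ => by ring

/-- Gram matrix of a negative cyclic family `v 0, …, v (n - 1)`; the five cases are disjoint
only when `3 ≤ n`. -/
def cyclicGram (n : ℕ) (a : ℕ → ℤ) (i j : ℕ) : ℤ :=
  (if i = j then a i else 0) - (if j = i + 1 then 1 else 0) - (if i = j + 1 then 1 else 0)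
    + (if i = 0 ∧ j = n - 1 then 1 else 0) + (if j = 0 ∧ i = n - 1 then 1 else 0)

theorem stdInnerZ_eq_cyclicGram {n : ℕ} {v : ℕ → Fin n → ℤ} {a : ℕ → ℤ} (hn : 3 ≤ n)
    (hdiag : ∀ i < n, stdInnerZ (v i) (v i) = a i)
    (hadj : ∀ i, i + 1 < n → stdInnerZ (v i) (v (i + 1)) = -1)
    (hwrap : stdInnerZ (v (n - 1)) (v 0) = 1)
    (hzero : ∀ i j, i < n → j < n → i ≠ j → j ≠ i + 1 → i ≠ j + 1 →
      ¬(i = 0 ∧ j = n - 1) → ¬(j = 0 ∧ i = n - 1) → stdInnerZ (v i) (v j) = 0)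
    {i j : ℕ} (hi : i < n) (hj : j < n) : stdInnerZ (v i) (v j) = cyclicGram n a i j := by
  unfold cyclicGram
  by_cases h1 : i = j
  · subst h1; rw [hdiag i hi]; grind
  by_cases h2 : j = i + 1
  · subst h2; rw [hadj i hj]; grind
  by_cases h3 : i = j + 1
  · subst h3; rw [stdInnerZ_comm, hadj j hi]; grind
  by_cases h4 : i = 0 ∧ j = n - 1
  · obtain ⟨rfl, rfl⟩ := h4; rw [stdInnerZ_comm, hwrap]; grind
  by_cases h5 : j = 0 ∧ i = n - 1
  · obtain ⟨rfl, rfl⟩ := h5; rw [hwrap]; grind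
  rw [hzero i j hi hj h1 h2 h3 h4 h5]; grind

theorem sum_sum_mul_cyclicGram_eq (m : ℕ) (a B : ℕ → ℤ) :
    ∑ i ∈ range (m + 1), ∑ j ∈ range (m + 1), B i * B j * cyclicGram (m + 1) a i j =
      ∑ i ∈ range (m + 1), a i * B i ^ 2 - 2 * ∑ i ∈ range m, B i * B (i + 1)
        + 2 * (B 0 * B m) := by
  have hsucc : ∑ i ∈ range (m + 1), ∑ j ∈ range (m + 1), (if j = i + 1 then B i * B j else 0)
      = ∑ i ∈ range m, B i * B (i + 1) := by
    simp [sum_ite_eq', sum_range_ite_lt]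
  have hpred : ∑ i ∈ range (m + 1), ∑ j ∈ range (m + 1), (if i = j + 1 then B i * B j else 0)
      = ∑ i ∈ range m, B i * B (i + 1) := by
    rw [sum_comm, ← hsucc]
    exact sum_congr rfl fun _ _ => sum_congr rfl fun _ _ => by rw [mul_comm]
  have hdiag : ∑ i ∈ range (m + 1), ∑ j ∈ range (m + 1), (if i = j then B i * B j * a i else 0)
      = ∑ i ∈ range (m + 1), a i * B i ^ 2 := by
    simp only [sum_ite_eq, mem_range]
    exact sum_congr rfl fun i hi => by rw [if_pos (mem_range.mp hi)]; ring
  simp only [cyclicGram, mul_add, mul_sub, mul_ite, mul_zero, mul_one, sum_add_distrib,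
    sum_sub_distrib, hsucc, hpred, hdiag]
  simp only [add_tsub_cancel_right, ite_and, sum_ite_irrel, sum_ite_eq', mem_range,
    lt_add_iff_pos_right, Order.lt_one_iff, ↓reduceIte, sum_const_zero, lt_add_iff_pos_left,
    Order.lt_add_one_iff, zero_le]
  ring

theorem cyclic_quadratic_form_eq_sum_sq (m : ℕ) (a B : ℕ → ℤ) :
    ∑ i ∈ range (m + 1), a i * B i ^ 2 - 2 * ∑ i ∈ range m, B i * B (i + 1) + 2 * (B 0 * B m) =
      ∑ i ∈ range (m + 1), (a i - 2) * B i ^ 2 + ∑ i ∈ range m, (B i - B (i + 1)) ^ 2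
        + (B 0 + B m) ^ 2 := by
  have hsq : ∑ i ∈ range m, (B i - B (i + 1)) ^ 2 = ∑ i ∈ range m, B i ^ 2
      + ∑ i ∈ range m, B (i + 1) ^ 2 - 2 * ∑ i ∈ range m, B i * B (i + 1) := by
    simp only [sub_sq, sum_add_distrib, sum_sub_distrib, mul_sum]
    ring_nf
  have h0 := sum_range_succ (fun i => B i ^ 2) m
  have h1 := sum_range_succ' (fun i => B i ^ 2) m
  simp only [sub_mul, sum_sub_distrib, ← mul_sum, hsq]
  linear_combination h0 + h1

theorem sum_sub_two_le_stdInnerZ_self {m : ℕ} {v : ℕ → Fin (m + 1) → ℤ} {a B : ℕ → ℤ}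
    (hgram : ∀ i ∈ range (m + 1), ∀ j ∈ range (m + 1),
      stdInnerZ (v i) (v j) = cyclicGram (m + 1) a i j)
    (ha : ∀ i ∈ range (m + 1), 2 ≤ a i) (hB : ∀ i ∈ range (m + 1), Odd (B i)) :
    ∑ i ∈ range (m + 1), (a i - 2) ≤ stdInnerZ (fun t => ∑ i ∈ range (m + 1), B i * v i t)
      (fun t => ∑ i ∈ range (m + 1), B i * v i t) := by
  rw [stdInnerZ_sum_mul_self, sum_congr rfl fun i hi => sum_congr rfl fun j hj => by
    rw [hgram i hi j hj], sum_sum_mul_cyclicGram_eq, cyclic_quadratic_form_eq_sum_sq]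
  have hdiag := sum_le_sum_mul_sq_of_odd (fun i hi => sub_nonneg.2 (ha i hi)) hB
  have hpath : 0 ≤ ∑ i ∈ range m, (B i - B (i + 1)) ^ 2 := sum_nonneg fun _ _ => sq_nonneg _
  linarith [sq_nonneg (B 0 + B m)]

/-- Let S = {v₁,…,vₙ} ⊂ ℤⁿ (n ≥ 3) be a negative cyclic subset
(⟨vᵢ,vᵢ⟩ = aᵢ ≥ 2, ⟨vᵢ,vᵢ₊₁⟩ = −1 for 1 ≤ i ≤ n−1, ⟨vₙ,v₁⟩ = 1, other pairwise
inner products zero) with I(S) = Σᵢ(aᵢ−3) > 0, whose Wu element W = Σᵢ vᵢ has all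
coordinates odd. Then the sublattice generated by S is not cubiquitous: some unit
cube x₀ + {0,1}ⁿ contains no point of the lattice. -/
theorem stmt_7 (n : ℕ) (hn : 3 ≤ n) (v : ℕ → Fin n → ℤ) (a : ℕ → ℤ)
    (ha : ∀ i < n, 2 ≤ a i)
    (hdiag : ∀ i < n, stdInnerZ (v i) (v i) = a i)
    (hadj : ∀ i, i + 1 < n → stdInnerZ (v i) (v (i + 1)) = -1)
    (hwrap : stdInnerZ (v (n - 1)) (v 0) = 1)
    (hzero : ∀ i j, i < n → j < n → i ≠ j → j ≠ i + 1 → i ≠ j + 1 →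
      ¬(i = 0 ∧ j = n - 1) → ¬(j = 0 ∧ i = n - 1) → stdInnerZ (v i) (v j) = 0)
    (hI : 0 < ∑ i ∈ Finset.range n, (a i - 3))
    (hodd : ∀ t : Fin n, Odd (∑ i ∈ Finset.range n, v i t)) :
    ∃ x₀ : Fin n → ℤ, ∀ c : ℕ → ℤ,
      ¬ ∀ t : Fin n, (∑ i ∈ Finset.range n, c i * v i t) = x₀ t ∨
        (∑ i ∈ Finset.range n, c i * v i t) = x₀ t + 1 := by
  choose k hk using hodd
  refine ⟨k, fun c hc => ?_⟩
  obtain ⟨m, rfl⟩ : ∃ m, n = m + 1 := ⟨n - 1, by omega⟩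
  have hcoord : ∀ t, (∑ i ∈ range (m + 1), (2 * c i - 1) * v i t) ^ 2 = 1 := by
    intro t
    have h2 : ∑ i ∈ range (m + 1), (2 * c i - 1) * v i t
        = 2 * ∑ i ∈ range (m + 1), c i * v i t - ∑ i ∈ range (m + 1), v i t := by
      simp only [sub_mul, sum_sub_distrib, mul_assoc, ← mul_sum, one_mul]
    rcases hc t with h | h <;> rw [h2, h, hk t] <;> ring
  have hbound : ∑ i ∈ range (m + 1), (a i - 2) ≤
      stdInnerZ (fun t => ∑ i ∈ range (m + 1), (2 * c i - 1) * v i t)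
        (fun t => ∑ i ∈ range (m + 1), (2 * c i - 1) * v i t) := sum_sub_two_le_stdInnerZ_self
    (fun i hi j hj => stdInnerZ_eq_cyclicGram hn hdiag hadj hwrap hzero
      (mem_range.1 hi) (mem_range.1 hj))
    (fun i hi => ha i (mem_range.1 hi)) (fun i _ => ⟨c i - 1, by ring⟩)
  rw [stdInnerZ_self_of_sq_eq_one hcoord] at hbound
  push_cast at hbound
  have hshift : ∑ i ∈ range (m + 1), (a i - 2) = ∑ i ∈ range (m + 1), (a i - 3) + (m + 1) := by
    simp only [sum_sub_distrib, sum_const, card_range, Int.nsmul_eq_mul, Nat.cast_add, Nat.cast_one]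
    ring
  linarith
end

section
/- For every n ≥ 2, let Mₙ be the n×n integer matrix with Mᵢᵢ = −2 for all i, M_{i,i+1} = M_{i+1,i} = 1 for 1 ≤ i ≤ n−1, M_{1,n} = M_{n,1} = −1 (for n ≥ 3; for n = 2 take M₁₂ = M₂₁ = 1 + (−1) = 0, i.e., the off-diagonal entries are 0). Then |det Mₙ| = 4. -/
/-- The intersection matrix of the cyclic plumbing X^{−1}_{(2,…,2)} with n vertices:
diagonal entries −2, cyclically adjacent entries 1, except that the entry joining
vertex n to vertex 1 is −1 (so that for n = 2 the contributions +1 and −1 joining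
the two vertices cancel and the off-diagonal entries are 0). -/
def cycMat (n : ℕ) : Matrix (Fin n) (Fin n) ℤ := fun i j =>
  (if i = j then -2 else 0) +
    (if (i : ℕ) + 1 = (j : ℕ) ∨ (j : ℕ) + 1 = (i : ℕ) then 1 else 0) +
      (if ((i : ℕ) = 0 ∧ (j : ℕ) = n - 1) ∨ ((j : ℕ) = 0 ∧ (i : ℕ) = n - 1) then -1 else 0)

/-!
Let `S` be the twisted cyclic shift `e_j ↦ e_{j+1}`, `e_{n-1} ↦ -e_0`. It is a signed permutation
matrix, so `S Sᵀ = 1`, and expanding gives `Mₙ = -(1 - S)(1 - S)ᵀ`; hence `|det Mₙ| = det (1 - S)²`.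
The last diagonal entry of `1 - S` is `1`, and its Schur complement is `1 - S` one size smaller,
so `det (1 - S)` does not depend on `n` and equals its value `2` for `n = 1`.
-/

open Matrix

theorem diagonal_mul_permMatrix_mul_transpose {ι R : Type*} [Fintype ι] [DecidableEq ι]
    [CommRing R] (σ : Equiv.Perm ι) {s : ι → R} (hs : ∀ i, s i * s i = 1) :
    diagonal s * σ.permMatrix R * (diagonal s * σ.permMatrix R)ᵀ = 1 := by
  rw [transpose_mul, diagonal_transpose, transpose_permMatrix, mul_assoc,
    ← mul_assoc (σ.permMatrix R), ← permMatrix_mul, inv_mul_cancel, permMatrix_one, one_mul,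
    diagonal_mul_diagonal, funext hs, diagonal_one]

theorem det_eq_det_schur_of_last_eq_one {R : Type*} [CommRing R] {k : ℕ}
    (M : Matrix (Fin (k + 1)) (Fin (k + 1)) R) (h : M (Fin.last k) (Fin.last k) = 1) :
    M.det = (of fun i j : Fin k =>
      M i.castSucc j.castSucc - M i.castSucc (Fin.last k) * M (Fin.last k) j.castSucc).det := by
  have hlast : Fin.natAdd k (0 : Fin 1) = Fin.last k := rfl
  rw [← det_reindex_self finSumFinEquiv.symm, ← fromBlocks_toBlocks (reindex _ _ _)]
  have h22 : (reindex finSumFinEquiv.symm finSumFinEquiv.symm M).toBlocks₂₂ = 1 := by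
    ext i j
    fin_cases i; fin_cases j
    simpa [toBlocks₂₂, hlast] using h
  rw [h22, det_fromBlocks_one₂₂]
  congr 1
  ext i j
  simp only [toBlocks₁₁, toBlocks₁₂, toBlocks₂₁, reindex_apply, Equiv.symm_symm, submatrix_apply,
    finSumFinEquiv_apply_left, finSumFinEquiv_apply_right, Matrix.sub_apply, of_apply, mul_apply,
    Finset.univ_unique, Fin.default_eq_zero, Finset.sum_singleton, hlast]
  rfl

def twistedShift (n : ℕ) : Matrix (Fin n) (Fin n) ℤ := of fun i j =>
  if (i : ℕ) = (j : ℕ) + 1 then 1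
  else if (i : ℕ) = 0 ∧ (j : ℕ) = n - 1 then -1 else 0

theorem twistedShift_eq_diagonal_mul_permMatrix (m : ℕ) :
    twistedShift (m + 1) =
      diagonal (fun i => if i = 0 then -1 else 1) * (finRotate (m + 1))⁻¹.permMatrix ℤ := by
  ext i j
  simp only [twistedShift, of_apply, diagonal_mul, PEquiv.toMatrix_toPEquiv_apply, Pi.single_apply,
    Equiv.Perm.eq_inv_iff_eq]
  simp only [Fin.ext_iff, coe_finRotate, Fin.val_last, Fin.val_zero]
  split_ifs <;> omega

theorem twistedShift_mul_transpose (m : ℕ) :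
    twistedShift (m + 1) * (twistedShift (m + 1))ᵀ = 1 := by
  rw [twistedShift_eq_diagonal_mul_permMatrix]
  exact diagonal_mul_permMatrix_mul_transpose _ fun i => by split_ifs <;> norm_num

theorem cycMat_eq_neg_mul_transpose (m : ℕ) :
    cycMat (m + 2) = -((1 - twistedShift (m + 2)) * (1 - twistedShift (m + 2))ᵀ) := by
  have expand : (1 - twistedShift (m + 2)) * (1 - twistedShift (m + 2))ᵀ =
      1 - twistedShift (m + 2) - (twistedShift (m + 2))ᵀ +
        twistedShift (m + 2) * (twistedShift (m + 2))ᵀ := by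
    rw [transpose_sub, transpose_one]
    noncomm_ring
  rw [expand, twistedShift_mul_transpose]
  ext i j
  simp only [cycMat, twistedShift, neg_apply, Matrix.add_apply, Matrix.sub_apply, one_apply,
    transpose_apply, of_apply, Fin.ext_iff]
  split_ifs <;> omega

theorem det_one_sub_twistedShift (m : ℕ) : (1 - twistedShift (m + 1)).det = 2 := by
  induction m with
  | zero => simp [twistedShift]
  | succ m ih =>
    rw [det_eq_det_schur_of_last_eq_one _ (by simp [twistedShift]), ← ih]
    congr 1
    ext i j
    simp only [twistedShift, Matrix.sub_apply, one_apply, of_apply, Fin.ext_iff, Fin.val_castSucc,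
      Fin.val_last]
    split_ifs <;> omega

/-- For every n ≥ 2, |det Mₙ| = 4. -/
theorem stmt_13 (n : ℕ) (hn : 2 ≤ n) : (cycMat n).det.natAbs = 4 := by
  obtain ⟨m, rfl⟩ := Nat.exists_eq_add_of_le' hn
  rw [cycMat_eq_neg_mul_transpose, det_neg, det_mul, det_transpose,
    det_one_sub_twistedShift (m + 1)]
  simp [Int.natAbs_mul]
end

section
/- Let Δ(t) = (t − 1)² · (1 − 6t + 19t² − 29t³ + 19t⁴ − 6t⁵ + t⁶) ∈ ℤ[t, t⁻¹]. Then there is no Laurent polynomial f ∈ ℤ[t, t⁻¹] and no unit u = ±tᵏ of ℤ[t, t⁻¹] such that Δ(t) = u · f(t) · f(t⁻¹). -/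
open Polynomial LaurentPolynomial

/-!
Evaluate at a primitive cube root of unity `ω`, which lives in the Eisenstein integers `ℤ[ω]`.
Since `ω⁻¹ = ω̄`, a factorisation `Δ = u · f(t) · f(t⁻¹)` becomes `Δ(ω) = u(ω) · f(ω) · f̄(ω)`,
and taking norms gives `N(Δ(ω)) = N(f(ω))²` because units of `ℤ[ω]` have norm `1`.
Here `Δ(ω) = 120ω`, so `N(f(ω)) = ±120`. But `2` is inert in `ℤ[ω]`, so no norm is `8` modulo `16`.
-/

open QuadraticAlgebra

namespace LaurentPolynomial

theorem eval₂_invert_eq_star {S : Type*} [CommRing S] [StarRing S] (x : unitary S)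
    (p : LaurentPolynomial ℤ) :
    eval₂ (Int.castRingHom S) (Unitary.toUnits x) (invert p) =
      star (eval₂ (Int.castRingHom S) (Unitary.toUnits x) p) := by
  induction p using LaurentPolynomial.induction_on' with
  | add p q hp hq => simp only [map_add, hp, hq, star_add]
  | C_mul_T n a =>
    rw [map_mul, invert_C, invert_T, map_mul, map_mul, eval₂_C, eval₂_T, eval₂_T, star_mul',
      eq_intCast, star_intCast, zpow_neg, ← map_zpow, ← map_inv]
    -- inversion in `unitary S` is `star`
    rfl

end LaurentPolynomial

theorem QuadraticAlgebra.omega_mem_unitary {R : Type*} [CommRing R] {b : R} :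
    (ω : QuadraticAlgebra R (-1) b) ∈ unitary _ :=
  mem_unitary (by simp [norm_def])

abbrev EisensteinInt := QuadraticAlgebra ℤ (-1) (-1)

namespace EisensteinInt

theorem norm_nonneg (z : EisensteinInt) : 0 ≤ z.norm := by
  rw [norm_def]
  nlinarith [sq_nonneg (z.re - z.im), sq_nonneg z.re, sq_nonneg z.im]

theorem norm_eq_one_of_isUnit {v : EisensteinInt} (hv : IsUnit v) : v.norm = 1 :=
  (Int.isUnit_iff.mp (isUnit_iff_norm_isUnit.mp hv)).resolve_right
    fun h ↦ by linarith [norm_nonneg v]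

theorem norm_unit_mul_mul_star {v : EisensteinInt} (hv : IsUnit v) (z : EisensteinInt) :
    (v * z * star z).norm = z.norm ^ 2 := by
  rw [mul_assoc, ← algebraMap_norm_eq_mul_star, map_mul, norm_eq_one_of_isUnit hv,
    QuadraticAlgebra.norm_algebraMap, one_mul]

theorem intCast_norm_ne_eight (z : EisensteinInt) : (z.norm : ZMod 16) ≠ 8 := by
  have hmod : ∀ x y : ZMod 16, x * x + -1 * x * y - -1 * y * y ≠ 8 := by decide
  rw [norm_def]
  push_cast
  exact hmod _ _

theorem norm_unit_mul_mul_star_ne_sq {v : EisensteinInt} (hv : IsUnit v) (z : EisensteinInt)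
    {n : ℤ} (hn : (n : ZMod 16) = 8) : (v * z * star z).norm ≠ n ^ 2 := by
  rw [norm_unit_mul_mul_star hv, Ne, sq_eq_sq_iff_eq_or_eq_neg]
  rintro (h | h) <;> apply intCast_norm_ne_eight z <;> rw [h]
  · exact hn
  · rw [Int.cast_neg, hn]
    decide

end EisensteinInt

/-- Δ(t) = (t−1)²·(1 − 6t + 19t² − 29t³ + 19t⁴ − 6t⁵ + t⁶) ∈ ℤ[t,t⁻¹]
cannot be written as u·f(t)·f(t⁻¹) for a Laurent polynomial f and a unit u of ℤ[t,t⁻¹]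
(the units of ℤ[t,t⁻¹] being exactly the ±tᵏ). -/
theorem stmt_17 :
    ¬ ∃ (f : LaurentPolynomial ℤ) (u : (LaurentPolynomial ℤ)ˣ),
      Polynomial.toLaurent
          ((X - 1) ^ 2 * (1 - 6 * X + 19 * X ^ 2 - 29 * X ^ 3 + 19 * X ^ 4 - 6 * X ^ 5 + X ^ 6) :
            Polynomial ℤ) =
        (u : LaurentPolynomial ℤ) * f * LaurentPolynomial.invert f := by
  rintro ⟨f, u, h⟩
  set evalω := eval₂ (Int.castRingHom EisensteinInt) (Unitary.toUnits ⟨ω, omega_mem_unitary⟩)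
  refine EisensteinInt.norm_unit_mul_mul_star_ne_sq (u.isUnit.map evalω) (evalω f) (n := 120)
    (by decide) ?_
  rw [← eval₂_invert_eq_star, ← map_mul evalω, ← map_mul evalω, ← h]
  simp only [evalω, eval₂_toLaurent, eval₂_mul, eval₂_pow, eval₂_sub, eval₂_add, eval₂_one,
    eval₂_X, eval₂_ofNat]
  decide
end
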